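/- The limiting root-degree distribution of the type III uniform infinite planar triangulation is a probability distribution: Σ_{k=3}^{∞} ((2k−3)! / ((k−3)!(k−1)!)) · (3/16)^{k−1} = 1. -/

import Mathlib

/-!
Writing `n = k - 1`, the summand is `(n - 1) / 2 · C(2n, n) · xⁿ` with `x = 3/16`, and the
missing terms `n = 0, 1` add up to `-1/2`. The binomial series gives
`∑ C(2n, n) xⁿ = (1 - 4x)^(-1/2) = 2`, and the recurrence
`(n + 1) C(2n + 2, n + 1) = 2 (2n + 1) C(2n, n)` turns `∑ n C(2n, n) xⁿ` into a linear equation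
whose solution is `2x (1 - 4x)^(-3/2) = 3`. Hence the sum is `(3 - 2) / 2 + 1/2 = 1`.
-/

open Nat

theorem ascPochhammer_eval_half {K : Type*} [Field K] [CharZero K] (n : ℕ) :
    (ascPochhammer K n).eval (1 / 2) = n ! * centralBinom n / 4 ^ n := by
  induction n with
  | zero => simp
  | succ n ih =>
    have h : ((n + 1 : ℕ) : K) * centralBinom (n + 1) = 2 * (2 * n + 1) * centralBinom n := by
      exact_mod_cast succ_mul_centralBinom_succ n
    rw [ascPochhammer_succ_eval, ih, factorial_succ, pow_succ]
    push_cast at h ⊢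
    linear_combination -(n ! : K) / (4 ^ n * 4) * h

theorem Ring.multichoose_half {K : Type*} [Field K] [CharZero K] (n : ℕ) :
    Ring.multichoose (1 / 2 : K) n = centralBinom n / 4 ^ n := by
  have h := Ring.factorial_nsmul_multichoose_eq_ascPochhammer (1 / 2 : K) n
  rw [Polynomial.ascPochhammer_smeval_eq_eval, ascPochhammer_eval_half, nsmul_eq_mul] at h
  have : (n ! : K) ≠ 0 := by exact_mod_cast factorial_ne_zero n
  field_simp at h ⊢
  linear_combination h

theorem hasSum_centralBinom_mul_pow {x : ℝ} (hx : |x| < 1 / 4) :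
    HasSum (fun n ↦ centralBinom n * x ^ n) (1 / √(1 - 4 * x)) := by
  have h := (Real.one_div_one_sub_rpow_hasFPowerSeriesOnBall_zero (1 / 2)).hasSum
    (y := 4 * x) (by
      rw [mem_eball_zero_iff, ← ofReal_norm, ENNReal.ofReal_lt_one, Real.norm_eq_abs, abs_mul]
      norm_num; linarith)
  have hcoeff (n : ℕ) : (centralBinom n : ℝ) / 4 ^ n * (4 * x) ^ n = centralBinom n * x ^ n := by
    field_simp; ring
  simpa only [FormalMultilinearSeries.ofScalars_apply_eq, ← Ring.multichoose_eq,
    Ring.multichoose_half, zero_add, smul_eq_mul, ← Real.sqrt_eq_rpow, hcoeff] using h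

theorem summable_natCast_mul_centralBinom_mul_pow {x : ℝ} (hx : |x| < 1 / 4) :
    Summable (fun n ↦ n * centralBinom n * x ^ n : ℕ → ℝ) := by
  refine .of_norm_bounded (summable_pow_mul_geometric_of_norm_lt_one 1 (r := 4 * |x|) ?_) fun n ↦ ?_
  · rw [Real.norm_eq_abs, abs_of_nonneg (by positivity)]; linarith
  · have h : (centralBinom n : ℝ) ≤ 4 ^ n := by exact_mod_cast centralBinom_le_four_pow n
    rw [norm_mul, norm_mul, norm_pow, Real.norm_natCast, Real.norm_natCast, Real.norm_eq_abs,
      pow_one, mul_pow, mul_assoc]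
    gcongr

theorem hasSum_natCast_mul_centralBinom_mul_pow {x : ℝ} (hx : |x| < 1 / 4) :
    HasSum (fun n ↦ n * centralBinom n * x ^ n) (2 * x / ((1 - 4 * x) * √(1 - 4 * x))) := by
  set A := 1 / √(1 - 4 * x)
  have hA : HasSum (fun n ↦ centralBinom n * x ^ n) A := hasSum_centralBinom_mul_pow hx
  obtain ⟨B, hB⟩ := summable_natCast_mul_centralBinom_mul_pow hx
  have hterm (n : ℕ) : ((n + 1 : ℕ) : ℝ) * centralBinom (n + 1) * x ^ (n + 1) =
      4 * x * (n * centralBinom n * x ^ n) + 2 * x * (centralBinom n * x ^ n) := by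
    have h : ((n + 1 : ℕ) : ℝ) * centralBinom (n + 1) = 2 * (2 * n + 1) * centralBinom n := by
      exact_mod_cast succ_mul_centralBinom_succ n
    rw [h]; ring
  have hshift : HasSum (fun n ↦ ((n + 1 : ℕ) : ℝ) * centralBinom (n + 1) * x ^ (n + 1))
      (4 * x * B + 2 * x * A) := by
    simpa only [hterm] using (hB.mul_left (4 * x)).add (hA.mul_left (2 * x))
  have hB' : B = 4 * x * B + 2 * x * A :=
    hB.unique ((hasSum_nat_add_iff' 1).mp (by simpa using hshift))
  have hpos : 0 < 1 - 4 * x := by linarith [le_abs_self x]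
  have hsqrt : 0 < √(1 - 4 * x) := Real.sqrt_pos.mpr hpos
  convert hB using 1
  simp only [A] at hB'
  field_simp at hB' ⊢
  linear_combination -hB'

theorem Nat.two_mul_factorial_two_mul_add_three (n : ℕ) :
    2 * (2 * n + 3)! = (n + 1) * centralBinom (n + 2) * n ! * (n + 2)! := by
  have h := choose_mul_factorial_mul_factorial (show n + 2 ≤ 2 * (n + 2) by omega)
  rw [show 2 * (n + 2) - (n + 2) = n + 2 by omega, ← centralBinom_eq_two_mul_choose,
    show 2 * (n + 2) = 2 * n + 3 + 1 by omega, factorial_succ (2 * n + 3)] at h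
  have h' : (n + 2)! = (n + 2) * ((n + 1) * n !) := by rw [factorial_succ, factorial_succ]
  apply Nat.eq_of_mul_eq_mul_left (show 0 < n + 2 by omega)
  calc (n + 2) * (2 * (2 * n + 3)!) = centralBinom (n + 2) * (n + 2)! * (n + 2)! := by
        rw [h]; ring
    _ = (n + 2) * ((n + 1) * centralBinom (n + 2) * n ! * (n + 2)!) := by
        nth_rw 1 [h']; ring

theorem factorial_two_mul_add_three_div_eq (n : ℕ) :
    ((2 * n + 3)! : ℝ) / (n ! * (n + 2)!) = (n + 1) * centralBinom (n + 2) / 2 := by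
  have h : (2 * (2 * n + 3)! : ℝ) = (n + 1) * centralBinom (n + 2) * n ! * (n + 2)! := by
    exact_mod_cast two_mul_factorial_two_mul_add_three n
  field_simp
  linear_combination h

theorem root_degree_distribution_sums_to_one :
    HasSum
      (fun i : ℕ =>
        (Nat.factorial (2 * (i + 3) - 3) : ℝ) /
            (Nat.factorial ((i + 3) - 3) * Nat.factorial ((i + 3) - 1)) *
          (3 / 16) ^ ((i + 3) - 1))
      1 := by
  have hx : |(3 / 16 : ℝ)| < 1 / 4 := by norm_num [abs_of_pos]
  have hsqrt : √(1 - 4 * (3 / 16 : ℝ)) = 1 / 2 := by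
    rw [Real.sqrt_eq_iff_mul_self_eq_of_pos] <;> norm_num
  have h := ((hasSum_natCast_mul_centralBinom_mul_pow hx).sub
    (hasSum_centralBinom_mul_pow hx)).div_const 2
  rw [← hasSum_nat_add_iff' 2] at h
  norm_num [Finset.sum_range_succ, hsqrt] at h
  refine h.congr_fun fun i ↦ ?_
  rw [show 2 * (i + 3) - 3 = 2 * i + 3 by omega, show i + 3 - 1 = i + 2 by omega,
    Nat.add_sub_cancel, factorial_two_mul_add_three_div_eq]
  ring
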